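/- arXiv:2309.16791 — 2 statements merged into one kernel-verified Lean document; each statement's English description precedes it below -/
import Mathlib

section
/- Let H be a δ-hyperbolic geodesic metric space. For any two closed balls B̄(c₁, r₁) and B̄(c₂, r₂) in H, the diameter of their intersection satisfies diam(B̄(c₁,r₁) ∩ B̄(c₂,r₂)) ≤ r₁ + r₂ − d(c₁, c₂) + 2δ. -/
/-- The Gromov product `⟨x,y⟩_w`. -/
noncomputable def gromovProd {H : Type*} [MetricSpace H] (w x y : H) : ℝ :=
  (dist x w + dist y w - dist x y) / 2

/-- `f` is a unit-speed geodesic parametrization of a segment from `x` to `y`. -/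
def IsGeodesicParam {H : Type*} [MetricSpace H] (x y : H) (f : ℝ → H) : Prop :=
  f 0 = x ∧ f (dist x y) = y ∧
    ∀ s ∈ Set.Icc (0:ℝ) (dist x y), ∀ t ∈ Set.Icc (0:ℝ) (dist x y),
      dist (f s) (f t) = |s - t|

/-- A geodesic metric space: any two points are joined by a geodesic segment. -/
def IsGeodesicSpace (H : Type*) [MetricSpace H] : Prop :=
  ∀ x y : H, ∃ f : ℝ → H, IsGeodesicParam x y f

/-- All geodesic triangles are `δ`-thin. -/
def ThinTriangles (H : Type*) [MetricSpace H] (δ : ℝ) : Prop :=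
  ∀ (r p q : H) (fp fq : ℝ → H), IsGeodesicParam r p fp → IsGeodesicParam r q fq →
    ∀ t ∈ Set.Icc (0:ℝ) (gromovProd r p q), dist (fp t) (fq t) ≤ δ

/-- A `δ`-hyperbolic geodesic metric space. -/
def IsDeltaHyperbolic (H : Type*) [MetricSpace H] (δ : ℝ) : Prop :=
  IsGeodesicSpace H ∧ ThinTriangles H δ ∧
    ∀ w x y z : H, min (gromovProd w x y) (gromovProd w y z) - δ ≤ gromovProd w x z

/-- The radius of a bounded subset `X`: the infimum of radii of closed balls containing
`X`. -/
noncomputable def setRadius {H : Type*} [MetricSpace H] (X : Set H) : ℝ :=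
  sInf {r : ℝ | ∃ c, X ⊆ Metric.closedBall c r}

theorem dist_add_dist_le_max_of_gromovProd {H : Type*} [MetricSpace H] {δ : ℝ} {x y c₁ c₂ : H}
    (h : min (gromovProd x c₁ y) (gromovProd x y c₂) - δ ≤ gromovProd x c₁ c₂) :
    dist x y + dist c₁ c₂ ≤ max (dist c₁ y + dist x c₂) (dist x c₁ + dist y c₂) + 2 * δ := by
  simp only [gromovProd, dist_comm c₁ x, dist_comm c₂ x, dist_comm y x] at h
  rcases min_cases ((dist x c₁ + dist x y - dist c₁ y) / 2)
      ((dist x y + dist x c₂ - dist y c₂) / 2) with ⟨hmin, -⟩ | ⟨hmin, -⟩ <;>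
    rw [hmin] at h
  · linarith [le_max_left (dist c₁ y + dist x c₂) (dist x c₁ + dist y c₂)]
  · linarith [le_max_right (dist c₁ y + dist x c₂) (dist x c₁ + dist y c₂)]

/-- Lemma 2.5: in a `δ`-hyperbolic geodesic space, the diameter of the intersection of two
closed balls `B̄(c₁,r₁)` and `B̄(c₂,r₂)` is at most `r₁ + r₂ − d(c₁,c₂) + 2δ`. -/
theorem diam_inter_closedBalls {H : Type} [MetricSpace H] (δ : ℝ)
    (hhyp : IsDeltaHyperbolic H δ) (c₁ c₂ : H) (r₁ r₂ : ℝ) :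
    ∀ x ∈ Metric.closedBall c₁ r₁ ∩ Metric.closedBall c₂ r₂,
      ∀ y ∈ Metric.closedBall c₁ r₁ ∩ Metric.closedBall c₂ r₂,
        dist x y ≤ r₁ + r₂ - dist c₁ c₂ + 2 * δ := by
  rintro x ⟨hx₁, hx₂⟩ y ⟨hy₁, hy₂⟩
  rw [Metric.mem_closedBall] at hx₁ hx₂ hy₁ hy₂
  have hfour := dist_add_dist_le_max_of_gromovProd (hhyp.2.2 x c₁ y c₂)
  have hmax : max (dist c₁ y + dist x c₂) (dist x c₁ + dist y c₂) ≤ r₁ + r₂ :=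
    max_le (by rw [dist_comm c₁ y]; linarith) (by linarith)
  linarith
end

section
/- Let H be a δ-hyperbolic geodesic metric space, X a finite nonempty subset of H, and a, b ∈ X points with d(a,b) = diam(X). Let m be the midpoint of a geodesic segment from a to b. Then X ⊆ B̄(m, d(a,b)/2 + δ); in particular m is a δ-center of X and d(a,b)/2 ≤ r(X) ≤ d(a,b)/2 + δ. -/
open Set Metric

variable {H : Type*} [MetricSpace H]

theorem gromovProd_le_dist_left (w x y : H) : gromovProd w x y ≤ dist x w := by
  unfold gromovProd
  linarith [dist_triangle y x w, dist_comm x y]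

namespace IsGeodesicParam

variable {x y : H} {f : ℝ → H}

theorem dist_apply_right (hf : IsGeodesicParam x y f) {t : ℝ} (ht : t ∈ Icc 0 (dist x y)) :
    dist (f t) y = dist x y - t := by
  have h := hf.2.2 t ht _ ⟨dist_nonneg, le_rfl⟩
  rw [hf.2.1] at h
  rw [h, abs_of_nonpos (by linarith [ht.2]), neg_sub]

theorem reverse (hf : IsGeodesicParam x y f) :
    IsGeodesicParam y x (fun s => f (dist x y - s)) := by
  obtain ⟨h0, h1, hdist⟩ := hf
  refine ⟨by simpa using h1, by simpa [dist_comm y x] using h0, ?_⟩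
  intro s hs t ht
  rw [dist_comm y x] at hs ht
  rw [hdist _ ⟨by linarith [hs.2], by linarith [hs.1]⟩ _ ⟨by linarith [ht.2], by linarith [ht.1]⟩,
    abs_sub_comm]
  ring_nf

end IsGeodesicParam

namespace ThinTriangles

variable {δ : ℝ} {a b p : H} {f g : ℝ → H}

theorem dist_apply_le (hthin : ThinTriangles H δ) (hg : IsGeodesicParam a p g)
    (hf : IsGeodesicParam a b f) {t : ℝ} (ht : t ∈ Icc 0 (gromovProd a p b)) :
    dist p (f t) ≤ dist a p - t + δ := by
  have htp : t ∈ Icc 0 (dist a p) :=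
    ⟨ht.1, ht.2.trans (by simpa [dist_comm] using gromovProd_le_dist_left a p b)⟩
  calc dist p (f t) ≤ dist (g t) p + dist (g t) (f t) := dist_triangle_left _ _ _
    _ ≤ dist a p - t + δ := by
      rw [hg.dist_apply_right htp]
      linarith [hthin a p b g f hg hf t ht]

theorem dist_midpoint_le_of_dist_le_dist (hthin : ThinTriangles H δ) (hgeod : IsGeodesicSpace H)
    (hf : IsGeodesicParam a b f) (hpb : dist p b ≤ dist p a) (hpa : dist p a ≤ dist a b) :
    dist p (f (dist a b / 2)) ≤ dist a b / 2 + δ := by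
  obtain ⟨g, hg⟩ := hgeod a p
  have hmid : dist a b / 2 ∈ Icc 0 (gromovProd a p b) := by
    refine ⟨by positivity, ?_⟩
    unfold gromovProd
    linarith [dist_comm a b]
  linarith [hthin.dist_apply_le hg hf hmid, dist_comm a p]

theorem dist_midpoint_le (hthin : ThinTriangles H δ) (hgeod : IsGeodesicSpace H)
    (hf : IsGeodesicParam a b f) (hpa : dist p a ≤ dist a b) (hpb : dist p b ≤ dist a b) :
    dist p (f (dist a b / 2)) ≤ dist a b / 2 + δ := by
  rcases le_total (dist p b) (dist p a) with hba | hab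
  · exact hthin.dist_midpoint_le_of_dist_le_dist hgeod hf hba hpa
  · have := hthin.dist_midpoint_le_of_dist_le_dist hgeod hf.reverse hab
      (by rwa [dist_comm b a])
    rw [dist_comm b a, show dist a b - dist a b / 2 = dist a b / 2 by ring] at this
    exact this

end ThinTriangles

section Radius

variable {X : Set H}

theorem setRadius_le (hX : X.Nonempty) {c : H} {r : ℝ} (h : X ⊆ closedBall c r) :
    setRadius X ≤ r := by
  obtain ⟨x, hx⟩ := hX
  refine csInf_le ⟨0, ?_⟩ ⟨c, h⟩
  rintro s ⟨c', hc'⟩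
  exact dist_nonneg.trans (hc' hx)

theorem half_dist_le_setRadius (hbdd : Bornology.IsBounded X) {a b : H} (ha : a ∈ X)
    (hb : b ∈ X) : dist a b / 2 ≤ setRadius X := by
  obtain ⟨r, hr⟩ := hbdd.subset_closedBall a
  refine le_csInf ⟨r, a, hr⟩ ?_
  rintro s ⟨c, hc⟩
  linarith [dist_triangle_right a b c, mem_closedBall.1 (hc ha), mem_closedBall.1 (hc hb)]

end Radius

/-- Lemma 2.2 (diameter vs radius): if `[a,b]` is a diameter-realizing segment of a finite
set `X` with midpoint `m`, then `X ⊆ B̄(m, d(a,b)/2 + δ)`; in particular `m` is a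
`δ`-center of `X` and `d(a,b)/2 ≤ r(X) ≤ d(a,b)/2 + δ`. -/
theorem diam_vs_radius {H : Type} [MetricSpace H] (δ : ℝ)
    (hhyp : IsDeltaHyperbolic H δ)
    (X : Finset H) (hX : X.Nonempty) (a b : H) (ha : a ∈ X) (hb : b ∈ X)
    (hdiam : ∀ p ∈ X, ∀ q ∈ X, dist p q ≤ dist a b)
    (f : ℝ → H) (hf : IsGeodesicParam a b f) (m : H) (hm : m = f (dist a b / 2)) :
    (∀ p ∈ X, dist p m ≤ dist a b / 2 + δ) ∧
    (∀ p ∈ X, dist p m ≤ setRadius (X : Set H) + δ) ∧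
    dist a b / 2 ≤ setRadius (X : Set H) ∧
    setRadius (X : Set H) ≤ dist a b / 2 + δ := by
  have hball : ∀ p ∈ X, dist p m ≤ dist a b / 2 + δ := fun p hp =>
    hm ▸ hhyp.2.1.dist_midpoint_le hhyp.1 hf (hdiam p hp a ha) (hdiam p hp b hb)
  have hlower : dist a b / 2 ≤ setRadius (X : Set H) :=
    half_dist_le_setRadius X.finite_toSet.isBounded ha hb
  have hupper : setRadius (X : Set H) ≤ dist a b / 2 + δ :=
    setRadius_le (by exact_mod_cast hX) fun p hp => mem_closedBall.2 (hball p hp)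
  exact ⟨hball, fun p hp => (hball p hp).trans (by linarith), hlower, hupper⟩
end
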